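/- Let Q : ℝ^D × ℝ^D → ℝ be continuous, such that for each fixed y, the map x ↦ Q(x,y) is convex and strictly convex in each coordinate. Let (θ^(l)) be a sequence generated by coordinate-wise exact minimization of Q(·, θ^(l)) starting from θ^(l) (one full cycle through the D coordinates per iteration), and suppose ℓ(θ) := Q(θ,θ) - H(θ,θ) satisfies ℓ(θ^(l)) - ℓ(θ^(l+1)) → 0 and Q(θ^(l),θ^(l)) - Q(θ^(l+1),θ^(l)) ≤ ℓ(θ^(l)) - ℓ(θ^(l+1)). Then any cluster point θ̄ of (θ^(l)) is a coordinate-wise minimum of x ↦ Q(x, θ̄). -/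

import Mathlib

/-!
Along a subsequence with `θ (κ k) → θbar`, every coordinate step decreases `Q (·, θ (κ k))` by at
most `ℓ (θ (κ k)) - ℓ (θ (κ k + 1)) → 0`. A vanishing decrease forces a vanishing step: in the
limit the old coordinate minimizes the strictly convex section `t ↦ Q (update θbar j t) θbar`,
hence is its unique minimizer, and by convexity the new coordinate cannot stay away from it. So
all intermediate points of the sweep converge to `θbar` as well, and the coordinate-wise
minimality of each step passes to the limit.
-/

open Filter Function Set Topology

theorem ConvexOn.notMem_uIcc_of_lt {f : ℝ → ℝ} (hf : ConvexOn ℝ univ f) {s u a : ℝ}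
    (hu : f u ≤ f s) (ha : f s < f a) : a ∉ uIcc s u := fun h =>
  ha.not_ge <| (hf.le_on_segment trivial trivial (segment_eq_uIcc s u ▸ h)).trans
    (max_le le_rfl hu)

theorem StrictConvexOn.lt_of_forall_le {f : ℝ → ℝ} (hf : StrictConvexOn ℝ univ f) {a b : ℝ}
    (ha : ∀ t, f a ≤ f t) (hb : b ≠ a) : f a < f b := by
  by_contra! hba
  exact hb <| hf.eq_of_isMinOn (fun t _ => hba.trans (ha t)) (fun t _ => ha t) trivial trivial

theorem tendsto_of_isMin_of_tendsto_sub {X ι : Type*} [TopologicalSpace X] {l : Filter ι}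
    [l.NeBot] {F : X → ℝ → ℝ} (hF : Continuous (uncurry F)) (hconv : ∀ x, ConvexOn ℝ univ (F x))
    {x₀ : X} {s₀ : ℝ} (hstrict : StrictConvexOn ℝ univ (F x₀)) {p : ι → X} {s u : ι → ℝ}
    (hp : Tendsto p l (𝓝 x₀)) (hs : Tendsto s l (𝓝 s₀))
    (hmin : ∀ k t, F (p k) (u k) ≤ F (p k) t)
    (hgap : Tendsto (fun k => F (p k) (s k) - F (p k) (u k)) l (𝓝 0)) :
    Tendsto u l (𝓝 s₀) := by
  have hFt : ∀ t, Tendsto (fun k => F (p k) t) l (𝓝 (F x₀ t)) := fun t =>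
    (hF.tendsto (x₀, t)).comp (hp.prodMk_nhds tendsto_const_nhds)
  have hFs : Tendsto (fun k => F (p k) (s k)) l (𝓝 (F x₀ s₀)) :=
    (hF.tendsto (x₀, s₀)).comp (hp.prodMk_nhds hs)
  have hs₀_min : ∀ t, F x₀ s₀ ≤ F x₀ t := fun t =>
    le_of_tendsto_of_tendsto' (by simpa using hFs.sub hgap) (hFt t) fun k => by
      simpa only [sub_sub_cancel] using hmin k t
  have hsub : ∀ k, F (p k) (u k) ≤ F (p k) (s k) := fun k => hmin k (s k)
  refine tendsto_order.2 ⟨fun a ha => ?_, fun b hb => ?_⟩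
  · filter_upwards [hs.eventually (eventually_gt_nhds ha),
      hFs.eventually_lt (hFt a) (hstrict.lt_of_forall_le hs₀_min ha.ne)] with k hsk hFk
    by_contra! hua
    exact (hconv (p k)).notMem_uIcc_of_lt (hsub k) hFk (mem_uIcc.2 (Or.inr ⟨hua, hsk.le⟩))
  · filter_upwards [hs.eventually (eventually_lt_nhds hb),
      hFs.eventually_lt (hFt b) (hstrict.lt_of_forall_le hs₀_min hb.ne')] with k hsk hFk
    by_contra! hbu
    exact (hconv (p k)).notMem_uIcc_of_lt (hsub k) hFk (mem_uIcc.2 (Or.inl ⟨hsk.le, hbu⟩))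

def IsCoordinateSweep {D : ℕ} {α : Type*} (f : (Fin D → α) → ℝ) (v : ℕ → Fin D → α) : Prop :=
  ∀ j : Fin D, (∀ i, i ≠ j → v (j + 1) i = v j i) ∧ ∀ t, f (v (j + 1)) ≤ f (update (v j) j t)

namespace IsCoordinateSweep

variable {D : ℕ} {α : Type*} {f : (Fin D → α) → ℝ} {v : ℕ → Fin D → α}

theorem eq_update (hv : IsCoordinateSweep f v) (j : Fin D) :
    v (j + 1) = update (v j) j (v (j + 1) j) :=
  eq_update_iff.2 ⟨rfl, (hv j).1⟩

theorem le_update (hv : IsCoordinateSweep f v) (j : Fin D) (t : α) :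
    f (update (v j) j (v (j + 1) j)) ≤ f (update (v j) j t) :=
  hv.eq_update j ▸ (hv j).2 t

theorem succ_le (hv : IsCoordinateSweep f v) (j : Fin D) : f (v (j + 1)) ≤ f (v j) := by
  simpa using (hv j).2 (v j j)

theorem sub_succ_nonneg (hv : IsCoordinateSweep f v) (j : Fin D) :
    0 ≤ f (v j) - f (v (j + 1)) :=
  sub_nonneg.2 (hv.succ_le j)

theorem sub_succ_le (hv : IsCoordinateSweep f v) (j : Fin D) :
    f (v j) - f (v (j + 1)) ≤ f (v 0) - f (v D) := by
  rw [← Finset.sum_range_sub' (fun n => f (v n))]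
  exact Finset.single_le_sum (f := fun n => f (v n) - f (v (n + 1)))
    (fun n hn => hv.sub_succ_nonneg ⟨n, Finset.mem_range.1 hn⟩) (Finset.mem_range.2 j.2)

theorem sub_nonneg (hv : IsCoordinateSweep f v) : 0 ≤ f (v 0) - f (v D) := by
  rw [← Finset.sum_range_sub' (fun n => f (v n))]
  exact Finset.sum_nonneg fun n hn => hv.sub_succ_nonneg ⟨n, Finset.mem_range.1 hn⟩

end IsCoordinateSweep

section Sweeps

variable {D : ℕ} {ι : Type*} {l : Filter ι} {Q : (Fin D → ℝ) → (Fin D → ℝ) → ℝ}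
  {y : ι → Fin D → ℝ} {v : ι → ℕ → Fin D → ℝ} {x₀ y₀ : Fin D → ℝ}

theorem tendsto_sweep_of_tendsto_sub [l.NeBot]
    (hQcont : Continuous (fun p : (Fin D → ℝ) × (Fin D → ℝ) => Q p.1 p.2))
    (hQstrict : ∀ y x (j : Fin D),
      StrictConvexOn ℝ univ (fun t : ℝ => Q (update x j t) y))
    (hv : ∀ k, IsCoordinateSweep (Q · (y k)) (v k)) (hy : Tendsto y l (𝓝 y₀))
    (hv₀ : Tendsto (fun k => v k 0) l (𝓝 x₀))
    (hgap : Tendsto (fun k => Q (v k 0) (y k) - Q (v k D) (y k)) l (𝓝 0)) :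
    ∀ n ≤ D, Tendsto (fun k => v k n) l (𝓝 x₀) := by
  intro n
  induction n with
  | zero => exact fun _ => hv₀
  | succ n ih =>
    intro hn
    set j : Fin D := ⟨n, hn⟩
    have hvn : Tendsto (fun k => v k j) l (𝓝 x₀) := ih (Nat.le_of_succ_le hn)
    have hstep : Tendsto (fun k => Q (v k j) (y k) - Q (v k (j + 1)) (y k)) l (𝓝 0) :=
      squeeze_zero (fun k => (hv k).sub_succ_nonneg j) (fun k => (hv k).sub_succ_le j) hgap
    have hvj : Tendsto (fun k => v k (j + 1) j) l (𝓝 (x₀ j)) := by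
      refine tendsto_of_isMin_of_tendsto_sub (F := fun p t => Q (update p.1 j t) p.2)
        (by fun_prop) (fun p => (hQstrict p.2 p.1 j).convexOn) (hQstrict y₀ x₀ j)
        (hvn.prodMk_nhds hy) (tendsto_pi_nhds.1 hvn j) (fun k => (hv k).le_update j) ?_
      simpa [← (hv _).eq_update j] using hstep
    simpa [← (hv _).eq_update j] using hvn.update j hvj

theorem forall_le_update_of_tendsto_sub [l.NeBot]
    (hQcont : Continuous (fun p : (Fin D → ℝ) × (Fin D → ℝ) => Q p.1 p.2))
    (hQstrict : ∀ y x (j : Fin D),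
      StrictConvexOn ℝ univ (fun t : ℝ => Q (update x j t) y))
    (hv : ∀ k, IsCoordinateSweep (Q · (y k)) (v k)) (hy : Tendsto y l (𝓝 y₀))
    (hv₀ : Tendsto (fun k => v k 0) l (𝓝 x₀))
    (hgap : Tendsto (fun k => Q (v k 0) (y k) - Q (v k D) (y k)) l (𝓝 0)) (j : Fin D) (t : ℝ) :
    Q x₀ y₀ ≤ Q (update x₀ j t) y₀ := by
  have hlim := tendsto_sweep_of_tendsto_sub hQcont hQstrict hv hy hv₀ hgap
  exact le_of_tendsto_of_tendsto' ((hQcont.tendsto _).comp ((hlim (j + 1) j.2).prodMk_nhds hy))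
    ((hQcont.tendsto _).comp (((hlim j j.2.le).update j tendsto_const_nhds).prodMk_nhds hy))
    fun k => (hv k j).2 t

end Sweeps

theorem coordinate_descent_cluster_point_general (D : ℕ)
    (Q : (Fin D → ℝ) → (Fin D → ℝ) → ℝ)
    (hQcont : Continuous (fun p : (Fin D → ℝ) × (Fin D → ℝ) => Q p.1 p.2))
    (hQstrict : ∀ y x (j : Fin D),
      StrictConvexOn ℝ Set.univ (fun t : ℝ => Q (Function.update x j t) y))
    (ℓ : (Fin D → ℝ) → ℝ)
    (θ : ℕ → Fin D → ℝ)
    (w : ℕ → ℕ → Fin D → ℝ)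
    (hw0 : ∀ l, w l 0 = θ l) (hwD : ∀ l, w l D = θ (l + 1))
    (hwstep : ∀ l, ∀ j : Fin D,
      (∀ i : Fin D, i ≠ j → w l ((j : ℕ) + 1) i = w l (j : ℕ) i) ∧
      (∀ t : ℝ, Q (w l ((j : ℕ) + 1)) (θ l) ≤ Q (Function.update (w l (j : ℕ)) j t) (θ l)))
    (hdiff : Tendsto (fun l => ℓ (θ l) - ℓ (θ (l + 1))) atTop (nhds 0))
    (hsurr : ∀ l, Q (θ l) (θ l) - Q (θ (l + 1)) (θ l) ≤ ℓ (θ l) - ℓ (θ (l + 1)))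
    (θbar : Fin D → ℝ) (hcluster : MapClusterPt θbar atTop θ) :
    ∀ (j : Fin D) (t : ℝ), Q θbar θbar ≤ Q (Function.update θbar j t) θbar := by
  obtain ⟨κ, hκ, hθκ⟩ := hcluster.tendsto_subseq
  have hsweep : ∀ l, IsCoordinateSweep (Q · (θ l)) (w l) := hwstep
  have hgap : Tendsto (fun l => Q (w l 0) (θ l) - Q (w l D) (θ l)) atTop (𝓝 0) :=
    squeeze_zero (fun l => (hsweep l).sub_nonneg) (fun l => by simpa [hw0, hwD] using hsurr l)
      hdiff
  exact forall_le_update_of_tendsto_sub hQcont hQstrict (fun k => hsweep (κ k)) hθκ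
    (by simp only [hw0]; exact hθκ) (hgap.comp hκ.tendsto_atTop)

theorem coordinate_descent_cluster_point (D : ℕ)
    (Q H : (Fin D → ℝ) → (Fin D → ℝ) → ℝ)
    (hQcont : Continuous (fun p : (Fin D → ℝ) × (Fin D → ℝ) => Q p.1 p.2))
    (hQconv : ∀ y, ConvexOn ℝ Set.univ (fun x => Q x y))
    (hQstrict : ∀ y x (j : Fin D),
      StrictConvexOn ℝ Set.univ (fun t : ℝ => Q (Function.update x j t) y))
    (ℓ : (Fin D → ℝ) → ℝ) (hℓ : ∀ x, ℓ x = Q x x - H x x)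
    (θ : ℕ → Fin D → ℝ)
    (w : ℕ → ℕ → Fin D → ℝ)
    (hw0 : ∀ l, w l 0 = θ l) (hwD : ∀ l, w l D = θ (l + 1))
    (hwstep : ∀ l, ∀ j : Fin D,
      (∀ i : Fin D, i ≠ j → w l ((j : ℕ) + 1) i = w l (j : ℕ) i) ∧
      (∀ t : ℝ, Q (w l ((j : ℕ) + 1)) (θ l) ≤ Q (Function.update (w l (j : ℕ)) j t) (θ l)))
    (hdiff : Tendsto (fun l => ℓ (θ l) - ℓ (θ (l + 1))) atTop (nhds 0))
    (hsurr : ∀ l, Q (θ l) (θ l) - Q (θ (l + 1)) (θ l) ≤ ℓ (θ l) - ℓ (θ (l + 1)))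
    (θbar : Fin D → ℝ) (hcluster : MapClusterPt θbar atTop θ) :
    ∀ (j : Fin D) (t : ℝ), Q θbar θbar ≤ Q (Function.update θbar j t) θbar :=
  coordinate_descent_cluster_point_general D Q hQcont hQstrict ℓ θ w hw0 hwD hwstep hdiff hsurr θbar
    hcluster
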